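/- Let p, q ∈ (0,1), φ ∈ [0,2π), and let |ψ₀⟩ = √p|0⟩ + √(1−p)|1⟩ and |ψ₁⟩ = √q|0⟩ + e^{iφ}√(1−q)|1⟩ be distinct pure qubit states, excluding the case where p = q and φ = π both hold. Set ρ₀ = |ψ₀⟩⟨ψ₀| and ρ₁ = |ψ₁⟩⟨ψ₁|. Then for any ε ∈ (0,1) there exists n_ε such that for all n ≥ n_ε, inf{ Tr(Z[ρ₁^{⊗n}] E) : E Hermitian on (ℂ²)^{⊗n}, 0 ≤ E ≤ I, Tr(Z[ρ₀^{⊗n}] E) ≥ 1−ε } = 0. -/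

import Mathlib

/-!
The twirl of a pure product state is the equal mixture of `ψ^{⊗n}` and `(σ_z ψ)^{⊗n}`. Hence the
test `E = 1 - P`, with `P` the projection onto `span {ψ₁^{⊗n}, (σ_z ψ₁)^{⊗n}}`, has type-II
error exactly `0`. Under the hypotheses, the one-qubit overlaps `⟨ψ₁|σ_z ψ₁⟩ = 2q - 1`,
`⟨ψ₁|ψ₀⟩` and `⟨σ_z ψ₁|ψ₀⟩` all have modulus `< 1`; the overlaps of the tensor powers are their
`n`-th powers, so `P` captures only `O(r^{2n})` of `ψ₀^{⊗n}` and `(σ_z ψ₀)^{⊗n}`, and the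
type-I error of `E` tends to `0`.
-/

open Matrix Complex Set Filter

noncomputable section

/-- Number of 1s in a bit string. -/
def ones {n : ℕ} (x : Fin n → Fin 2) : ℕ := (Finset.univ.filter fun i => x i = 1).card

/-- The `n`-fold tensor power of a one-qubit operator, as a matrix indexed by bit strings. -/
def mpow (n : ℕ) (ρ : Matrix (Fin 2) (Fin 2) ℂ) :
    Matrix (Fin n → Fin 2) (Fin n → Fin 2) ℂ :=
  Matrix.of fun x y => ∏ i, ρ (x i) (y i)

/-- The parity operator ω = σ_z^{⊗n}: it multiplies a computational basis vector by
(-1)^(number of 1s). -/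
def parityOp (n : ℕ) : Matrix (Fin n → Fin 2) (Fin n → Fin 2) ℂ :=
  Matrix.diagonal fun x => (-1 : ℂ) ^ ones x

/-- The ℤ₂-twirling Z[X] = ½ (X + ωXω). -/
def twirl {n : ℕ} (X : Matrix (Fin n → Fin 2) (Fin n → Fin 2) ℂ) :
    Matrix (Fin n → Fin 2) (Fin n → Fin 2) ℂ :=
  (2 : ℂ)⁻¹ • (X + parityOp n * X * parityOp n)

/-- Rank-one projection |ψ⟩⟨ψ| on one qubit. -/
def projv (ψ : Fin 2 → ℂ) : Matrix (Fin 2) (Fin 2) ℂ := vecMulVec ψ (star ψ)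

/-- Rank-one projection |ψ⟩⟨ψ| on n qubits. -/
def projN {n : ℕ} (ψ : (Fin n → Fin 2) → ℂ) :
    Matrix (Fin n → Fin 2) (Fin n → Fin 2) ℂ := vecMulVec ψ (star ψ)

def ket0 : Fin 2 → ℂ := ![1, 0]

def ket1 : Fin 2 → ℂ := ![0, 1]

/-- The qubit state √p |0⟩ + e^{iφ} √(1-p) |1⟩. -/
def qubit (p φ : ℝ) : Fin 2 → ℂ :=
  ![(Real.sqrt p : ℂ), Complex.exp (Complex.I * φ) * (Real.sqrt (1 - p) : ℂ)]

/-- The qubit state √p |0⟩ + √(1-p) |1⟩. -/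
def qubitR (p : ℝ) : Fin 2 → ℂ := ![(Real.sqrt p : ℂ), (Real.sqrt (1 - p) : ℂ)]

open scoped ComplexOrder

/-- The set of type-II error probabilities Tr(σ₁ E) over POVM elements 0 ≤ E ≤ I
(Loewner order) whose type-I error is at most ε, i.e. Tr(σ₀ E) ≥ 1-ε. -/
def errSet (n : ℕ) (σ0 σ1 : Matrix (Fin n → Fin 2) (Fin n → Fin 2) ℂ) (ε : ℝ) : Set ℝ :=
  { x | ∃ E : Matrix (Fin n → Fin 2) (Fin n → Fin 2) ℂ,
      E.IsHermitian ∧ E.PosSemidef ∧ (1 - E).PosSemidef ∧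
      1 - ε ≤ ((σ0 * E).trace).re ∧ x = ((σ1 * E).trace).re }

def sigmaZ (ψ : Fin 2 → ℂ) : Fin 2 → ℂ := ![ψ 0, -ψ 1]

/-- The tensor power `ψ^{⊗n}`, the vector counterpart of `mpow`. -/
def vpow (n : ℕ) (ψ : Fin 2 → ℂ) : (Fin n → Fin 2) → ℂ := fun x => ∏ i, ψ (x i)

lemma sigmaZ_apply (ψ : Fin 2 → ℂ) (b : Fin 2) :
    sigmaZ ψ b = (if b = 1 then -1 else 1) * ψ b := by
  fin_cases b <;> simp [sigmaZ]

lemma star_sigmaZ_dotProduct (f g : Fin 2 → ℂ) :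
    star (sigmaZ f) ⬝ᵥ g = star f ⬝ᵥ sigmaZ g := by
  simp [sigmaZ, dotProduct, Fin.sum_univ_two]

lemma star_sigmaZ_dotProduct_sigmaZ (f g : Fin 2 → ℂ) :
    star (sigmaZ f) ⬝ᵥ sigmaZ g = star f ⬝ᵥ g := by
  simp [sigmaZ, dotProduct, Fin.sum_univ_two]

lemma sigmaZ_qubit (p φ : ℝ) : sigmaZ (qubit p φ) = qubit p (φ + Real.pi) := by
  have : Complex.exp (Complex.I * (φ + Real.pi)) = -Complex.exp (Complex.I * φ) := by
    rw [mul_add, Complex.exp_add, mul_comm Complex.I (Real.pi : ℂ), Complex.exp_pi_mul_I]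
    ring
  ext b
  fin_cases b <;> simp [sigmaZ, qubit, this]

lemma qubitR_eq_qubit (p : ℝ) : qubitR p = qubit p 0 := by
  ext b
  fin_cases b <;> simp [qubit, qubitR]

lemma vpow_sigmaZ {n : ℕ} (ψ : Fin 2 → ℂ) (x : Fin n → Fin 2) :
    vpow n (sigmaZ ψ) x = (-1) ^ ones x * vpow n ψ x := by
  rw [ones, ← Finset.prod_const, Finset.prod_filter, vpow, vpow, ← Finset.prod_mul_distrib]
  simp only [sigmaZ_apply]

lemma dotProduct_vpow (n : ℕ) (f g : Fin 2 → ℂ) :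
    star (vpow n f) ⬝ᵥ vpow n g = (star f ⬝ᵥ g) ^ n := by
  rw [← Fin.prod_const, dotProduct, dotProduct, Fintype.prod_sum]
  simp [vpow, Finset.prod_mul_distrib]

lemma mpow_projv (n : ℕ) (ψ : Fin 2 → ℂ) : mpow n (projv ψ) = projN (vpow n ψ) := by
  ext x y
  simp [mpow, projv, projN, vecMulVec_apply, vpow, Finset.prod_mul_distrib]

lemma twirl_mpow_projv (n : ℕ) (ψ : Fin 2 → ℂ) :
    twirl (mpow n (projv ψ)) = (2 : ℂ)⁻¹ • (projN (vpow n ψ) + projN (vpow n (sigmaZ ψ))) := by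
  rw [twirl, mpow_projv]
  congr 2
  ext x y
  simp only [parityOp, diagonal_mul, mul_diagonal, projN, vecMulVec_apply, Pi.star_apply,
    vpow_sigmaZ, star_mul', star_pow, star_neg, star_one]
  ring

lemma star_qubit_dotProduct_qubit (q φ p θ : ℝ) :
    star (qubit q φ) ⬝ᵥ qubit p θ = ((√q * √p : ℝ) : ℂ)
      + Complex.exp (Complex.I * (θ - φ : ℝ)) * ((√(1 - q) * √(1 - p) : ℝ) : ℂ) := by
  have hexp : Complex.exp (Complex.I * (θ - φ : ℝ))
      = starRingEnd ℂ (Complex.exp (Complex.I * φ)) * Complex.exp (Complex.I * θ) := by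
    rw [← Complex.exp_conj, map_mul, Complex.conj_I, Complex.conj_ofReal, ← Complex.exp_add]
    congr 1
    push_cast
    ring
  simp only [dotProduct, Fin.sum_univ_two, Pi.star_apply, qubit, cons_val_zero, cons_val_one,
    RCLike.star_def, map_mul, Complex.conj_ofReal, hexp]
  push_cast
  ring

lemma star_qubit_dotProduct_qubit_self {q : ℝ} (φ : ℝ) (hq : q ∈ Icc 0 1) :
    star (qubit q φ) ⬝ᵥ qubit q φ = 1 := by
  rw [star_qubit_dotProduct_qubit, sub_self, Complex.ofReal_zero, mul_zero, Complex.exp_zero,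
    one_mul, Real.mul_self_sqrt hq.1, Real.mul_self_sqrt (sub_nonneg.2 hq.2)]
  push_cast
  ring

lemma norm_ofReal_add_exp_mul_sq (a b t : ℝ) :
    ‖(a : ℂ) + Complex.exp (Complex.I * t) * b‖ ^ 2 = a ^ 2 + b ^ 2 + 2 * a * b * Real.cos t := by
  rw [mul_comm Complex.I, Complex.exp_mul_I, Complex.sq_norm, Complex.normSq_apply]
  simp only [add_re, ofReal_re, mul_re, cos_ofReal_re, sin_ofReal_re, I_re, mul_zero,
    sin_ofReal_im, I_im, mul_one, sub_self, add_zero, add_im, cos_ofReal_im, mul_im, zero_add,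
    ofReal_im, sub_zero]
  linear_combination b ^ 2 * Real.sin_sq_add_cos_sq t

lemma norm_star_qubit_dotProduct_qubit_lt_one {p q φ θ : ℝ} (hp : p ∈ Ioo 0 1)
    (hq : q ∈ Ioo 0 1) (h : ¬(p = q ∧ Real.cos (θ - φ) = 1)) :
    ‖star (qubit q φ) ⬝ᵥ qubit p θ‖ < 1 := by
  -- With `a = √q √p`, `b = √(1-q) √(1-p)`: `‖·‖² = a² + b² + 2ab cos (θ - φ) ≤ (a + b)² ≤ 1`
  -- (Cauchy–Schwarz in `ℝ²`), with equality only if `cos (θ - φ) = 1` and `p = q`.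
  obtain ⟨hp0, hp1⟩ := hp
  obtain ⟨hq0, hq1⟩ := hq
  have ha : 0 < √q * √p := by positivity
  have hb : 0 < √(1 - q) * √(1 - p) :=
    mul_pos (Real.sqrt_pos.2 (by linarith)) (Real.sqrt_pos.2 (by linarith))
  have hsq := Real.sq_sqrt hq0.le
  have hsp := Real.sq_sqrt hp0.le
  have hsq' := Real.sq_sqrt (by linarith : 0 ≤ 1 - q)
  have hsp' := Real.sq_sqrt (by linarith : 0 ≤ 1 - p)
  have hcos := Real.cos_le_one (θ - φ)
  have hnorm : ‖star (qubit q φ) ⬝ᵥ qubit p θ‖ ^ 2 < 1 := by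
    rw [star_qubit_dotProduct_qubit, norm_ofReal_add_exp_mul_sq]
    by_cases hpq : p = q
    · have hlt : Real.cos (θ - φ) < 1 := lt_of_le_of_ne hcos fun hc => h ⟨hpq, hc⟩
      nlinarith [mul_pos ha hb, sq_nonneg (√(1 - q) - √(1 - p)), sq_nonneg (√q - √p)]
    · have hne : √q - √p ≠ 0 := fun he => hpq (by rw [← hsp, ← hsq, sub_eq_zero.1 he])
      nlinarith [mul_pos ha hb, sq_nonneg (√(1 - q) - √(1 - p)), pow_pos (abs_pos.2 hne) 2,
        sq_abs (√q - √p)]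
  exact (pow_lt_one_iff_of_nonneg (norm_nonneg _) two_ne_zero).1 hnorm

section PairProjection

variable {m : Type*} [Fintype m]

/-- For unit vectors `u, w` with real overlap `g = ⟨u, w⟩`, the orthogonal projection onto
`span {u, w}`. -/
def pairProj (u w : m → ℂ) (g : ℂ) : Matrix m m ℂ :=
  (1 - g ^ 2)⁻¹ • (vecMulVec u (star u) + vecMulVec w (star w)
    - g • (vecMulVec u (star w) + vecMulVec w (star u)))

variable {u w : m → ℂ} {g : ℂ}

lemma pairProj_mulVec (z : m → ℂ) :
    pairProj u w g *ᵥ z = (1 - g ^ 2)⁻¹ • ((star u ⬝ᵥ z - g * (star w ⬝ᵥ z)) • u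
      + (star w ⬝ᵥ z - g * (star u ⬝ᵥ z)) • w) := by
  simp only [pairProj, smul_mulVec, sub_mulVec, add_mulVec, vecMulVec_mulVec, op_smul_eq_smul]
  module

lemma pairProj_mulVec_left (huu : star u ⬝ᵥ u = 1) (hwu : star w ⬝ᵥ u = g)
    (hg : 1 - g ^ 2 ≠ 0) : pairProj u w g *ᵥ u = u := by
  rw [pairProj_mulVec, huu, hwu, mul_one, sub_self, zero_smul, add_zero, smul_smul, ← sq,
    inv_mul_cancel₀ hg, one_smul]

lemma pairProj_mulVec_right (hww : star w ⬝ᵥ w = 1) (huw : star u ⬝ᵥ w = g)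
    (hg : 1 - g ^ 2 ≠ 0) : pairProj u w g *ᵥ w = w := by
  rw [pairProj_mulVec, hww, huw, mul_one, sub_self, zero_smul, zero_add, smul_smul, ← sq,
    inv_mul_cancel₀ hg, one_smul]

lemma isStarProjection_pairProj (huu : star u ⬝ᵥ u = 1) (hww : star w ⬝ᵥ w = 1)
    (huw : star u ⬝ᵥ w = g) (hwu : star w ⬝ᵥ u = g) (hg : 1 - g ^ 2 ≠ 0) :
    IsStarProjection (pairProj u w g) where
  isIdempotentElem := by
    refine ext_iff_mulVec.2 fun z => ?_
    rw [← mulVec_mulVec, pairProj_mulVec z, mulVec_smul, mulVec_add, mulVec_smul, mulVec_smul,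
      pairProj_mulVec_left huu hwu hg, pairProj_mulVec_right hww huw hg]
  isSelfAdjoint := by
    have hg_star : star g = g := by
      rw [← huw, ← star_dotProduct_star, star_star, huw, hwu]
    simp only [IsSelfAdjoint, pairProj, star_smul, star_sub, star_add, star_one, star_pow,
      hg_star, star_inv₀, Matrix.star_eq_conjTranspose, conjTranspose_vecMulVec, star_star]
    abel_nf

lemma norm_star_dotProduct_pairProj_mulVec_le {z : m → ℂ} {s : ℝ} (hg : ‖g‖ ^ 2 ≤ 2⁻¹)
    (hu : ‖star u ⬝ᵥ z‖ ≤ s) (hw : ‖star w ⬝ᵥ z‖ ≤ s) :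
    ‖star z ⬝ᵥ (pairProj u w g *ᵥ z)‖ ≤ 8 * s ^ 2 := by
  have hs : 0 ≤ s := (norm_nonneg _).trans hu
  have hzu : ‖star z ⬝ᵥ u‖ ≤ s := by rwa [star_dotProduct, norm_star]
  have hzw : ‖star z ⬝ᵥ w‖ ≤ s := by rwa [star_dotProduct, norm_star]
  have hg1 : ‖g‖ ≤ 1 := by nlinarith [norm_nonneg g]
  have hinv : ‖(1 - g ^ 2)⁻¹‖ ≤ 2 := by
    have h := norm_sub_norm_le (1 : ℂ) (g ^ 2)
    rw [norm_one, norm_pow] at h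
    rw [norm_inv]
    exact inv_le_of_inv_le₀ (by norm_num) (by linarith)
  have hcoef : ∀ x y : ℂ, ‖x‖ ≤ s → ‖y‖ ≤ s → ‖x - g * y‖ ≤ 2 * s := fun x y hx hy =>
    calc ‖x - g * y‖ ≤ ‖x‖ + ‖g‖ * ‖y‖ := (norm_sub_le _ _).trans_eq (by rw [norm_mul])
      _ ≤ s + 1 * s := by gcongr
      _ = 2 * s := by ring
  rw [pairProj_mulVec, dotProduct_smul, dotProduct_add, dotProduct_smul, dotProduct_smul]
  simp only [smul_eq_mul]
  calc _ ≤ 2 * (2 * s * s + 2 * s * s) := by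
        rw [norm_mul]
        gcongr
        refine (norm_add_le _ _).trans (add_le_add ?_ ?_) <;> rw [norm_mul]
        · exact mul_le_mul (hcoef _ _ hu hw) hzu (norm_nonneg _) (by positivity)
        · exact mul_le_mul (hcoef _ _ hw hu) hzw (norm_nonneg _) (by positivity)
    _ = 8 * s ^ 2 := by ring

lemma le_re_star_dotProduct_one_sub_pairProj_mulVec [DecidableEq m] {z : m → ℂ} {s : ℝ}
    (hg : ‖g‖ ^ 2 ≤ 2⁻¹) (hz : star z ⬝ᵥ z = 1) (hu : ‖star u ⬝ᵥ z‖ ≤ s) (hw : ‖star w ⬝ᵥ z‖ ≤ s) :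
    1 - 8 * s ^ 2 ≤ (star z ⬝ᵥ ((1 - pairProj u w g) *ᵥ z)).re := by
  rw [sub_mulVec, one_mulVec, dotProduct_sub, hz, Complex.sub_re, Complex.one_re]
  have := (Complex.re_le_norm _).trans (norm_star_dotProduct_pairProj_mulVec_le hg hu hw)
  linarith

end PairProjection

section ErrorSet

open scoped MatrixOrder

variable {n : ℕ}

lemma trace_projN_mul (x : (Fin n → Fin 2) → ℂ) (F : Matrix (Fin n → Fin 2) (Fin n → Fin 2) ℂ) :
    (projN x * F).trace = star x ⬝ᵥ (F *ᵥ x) := by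
  rw [projN, vecMulVec_mul, trace_vecMulVec, dotProduct_comm, dotProduct_mulVec]

lemma re_trace_mix_mul (x y : (Fin n → Fin 2) → ℂ)
    (F : Matrix (Fin n → Fin 2) (Fin n → Fin 2) ℂ) :
    (((2 : ℂ)⁻¹ • (projN x + projN y)) * F).trace.re
      = ((star x ⬝ᵥ (F *ᵥ x)).re + (star y ⬝ᵥ (F *ᵥ y)).re) / 2 := by
  rw [smul_mul_assoc, trace_smul, add_mul, trace_add, trace_projN_mul, trace_projN_mul,
    smul_eq_mul, ← Complex.ofReal_ofNat, ← Complex.ofReal_inv, Complex.re_ofReal_mul,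
    Complex.add_re]
  ring

lemma nonneg_of_mem_errSet {σ₀ : Matrix (Fin n → Fin 2) (Fin n → Fin 2) ℂ}
    {u w : (Fin n → Fin 2) → ℂ} {ε x : ℝ}
    (hx : x ∈ errSet n σ₀ ((2 : ℂ)⁻¹ • (projN u + projN w)) ε) : 0 ≤ x := by
  obtain ⟨F, -, hF, -, -, rfl⟩ := hx
  rw [re_trace_mix_mul]
  have hu := Complex.nonneg_iff.1 (hF.dotProduct_mulVec_nonneg u)
  have hw := Complex.nonneg_iff.1 (hF.dotProduct_mulVec_nonneg w)
  linarith [hu.1, hw.1]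

theorem sInf_errSet_mix_eq_zero {u w v v' : (Fin n → Fin 2) → ℂ} {g : ℂ} {s ε : ℝ}
    (huu : star u ⬝ᵥ u = 1) (hww : star w ⬝ᵥ w = 1)
    (huw : star u ⬝ᵥ w = g) (hwu : star w ⬝ᵥ u = g) (hg : ‖g‖ ^ 2 ≤ 2⁻¹)
    (hvv : star v ⬝ᵥ v = 1) (hv'v' : star v' ⬝ᵥ v' = 1)
    (huv : ‖star u ⬝ᵥ v‖ ≤ s) (hwv : ‖star w ⬝ᵥ v‖ ≤ s)
    (huv' : ‖star u ⬝ᵥ v'‖ ≤ s) (hwv' : ‖star w ⬝ᵥ v'‖ ≤ s) (hs : 8 * s ^ 2 ≤ ε) :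
    sInf (errSet n ((2 : ℂ)⁻¹ • (projN v + projN v')) ((2 : ℂ)⁻¹ • (projN u + projN w)) ε)
      = 0 := by
  have hg1 : 1 - g ^ 2 ≠ 0 := by
    intro h
    have : ‖g‖ ^ 2 = 1 := by rw [← norm_pow, ← sub_eq_zero.1 h, norm_one]
    linarith
  have hP := isStarProjection_pairProj huu hww huw hwu hg1
  set E := 1 - pairProj u w g
  have hEu : E *ᵥ u = 0 := by
    rw [sub_mulVec, one_mulVec, pairProj_mulVec_left huu hwu hg1, sub_self]
  have hEw : E *ᵥ w = 0 := by
    rw [sub_mulVec, one_mulVec, pairProj_mulVec_right hww huw hg1, sub_self]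
  refine IsLeast.csInf_eq
    ⟨⟨E, hP.one_sub.isSelfAdjoint, hP.one_sub_nonneg.posSemidef, ?_, ?_, ?_⟩,
      fun x hx => nonneg_of_mem_errSet hx⟩
  · rw [sub_sub_cancel]
    exact hP.nonneg.posSemidef
  · rw [re_trace_mix_mul]
    linarith [le_re_star_dotProduct_one_sub_pairProj_mulVec hg hvv huv hwv,
      le_re_star_dotProduct_one_sub_pairProj_mulVec hg hv'v' huv' hwv']
  · rw [re_trace_mix_mul, hEu, hEw]
    simp

end ErrorSet

theorem sInf_errSet_twirl_eq_zero {n : ℕ} {ψ₀ ψ₁ : Fin 2 → ℂ} {r ε : ℝ}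
    (h₀ : star ψ₀ ⬝ᵥ ψ₀ = 1) (h₁ : star ψ₁ ⬝ᵥ ψ₁ = 1)
    (hσ : ‖star ψ₁ ⬝ᵥ sigmaZ ψ₁‖ ≤ r) (hα : ‖star ψ₁ ⬝ᵥ ψ₀‖ ≤ r)
    (hβ : ‖star (sigmaZ ψ₁) ⬝ᵥ ψ₀‖ ≤ r) (hε : 8 * (r ^ 2) ^ n ≤ ε) (hr : (r ^ 2) ^ n ≤ 2⁻¹) :
    sInf (errSet n (twirl (mpow n (projv ψ₀))) (twirl (mpow n (projv ψ₁))) ε) = 0 := by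
  have hpow {c : ℂ} (hc : ‖c‖ ≤ r) : ‖c ^ n‖ ≤ r ^ n := by
    rw [norm_pow]
    exact pow_le_pow_left₀ (norm_nonneg c) hc n
  have hsq : (r ^ n) ^ 2 = (r ^ 2) ^ n := by ring
  rw [twirl_mpow_projv, twirl_mpow_projv]
  refine sInf_errSet_mix_eq_zero (s := r ^ n) ?_ ?_ (dotProduct_vpow n _ _) ?_ ?_ ?_ ?_ ?_ ?_ ?_ ?_
    (by rwa [hsq])
  · rw [dotProduct_vpow, h₁, one_pow]
  · rw [dotProduct_vpow, star_sigmaZ_dotProduct_sigmaZ, h₁, one_pow]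
  · rw [dotProduct_vpow, star_sigmaZ_dotProduct]
  · rw [← hsq] at hr
    exact (pow_le_pow_left₀ (norm_nonneg _) (hpow hσ) 2).trans hr
  · rw [dotProduct_vpow, h₀, one_pow]
  · rw [dotProduct_vpow, star_sigmaZ_dotProduct_sigmaZ, h₀, one_pow]
  · rw [dotProduct_vpow]; exact hpow hα
  · rw [dotProduct_vpow]; exact hpow hβ
  · rw [dotProduct_vpow, ← star_sigmaZ_dotProduct]; exact hpow hβ
  · rw [dotProduct_vpow, star_sigmaZ_dotProduct_sigmaZ]; exact hpow hα

theorem eventually_sInf_errSet_twirl_eq_zero {ψ₀ ψ₁ : Fin 2 → ℂ} (h₀ : star ψ₀ ⬝ᵥ ψ₀ = 1)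
    (h₁ : star ψ₁ ⬝ᵥ ψ₁ = 1) (hσ : ‖star ψ₁ ⬝ᵥ sigmaZ ψ₁‖ < 1) (hα : ‖star ψ₁ ⬝ᵥ ψ₀‖ < 1)
    (hβ : ‖star (sigmaZ ψ₁) ⬝ᵥ ψ₀‖ < 1) {ε : ℝ} (hε : 0 < ε) :
    ∀ᶠ n in atTop,
      sInf (errSet n (twirl (mpow n (projv ψ₀))) (twirl (mpow n (projv ψ₁))) ε) = 0 := by
  set r := max (max ‖star ψ₁ ⬝ᵥ sigmaZ ψ₁‖ ‖star ψ₁ ⬝ᵥ ψ₀‖) ‖star (sigmaZ ψ₁) ⬝ᵥ ψ₀‖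
  have hr : r ^ 2 < 1 := pow_lt_one₀ (by positivity) (max_lt (max_lt hσ hα) hβ) two_ne_zero
  filter_upwards [(tendsto_pow_atTop_nhds_zero_of_lt_one (sq_nonneg r) hr).eventually_lt_const
    (lt_min (by positivity : 0 < ε / 8) (by norm_num : (0 : ℝ) < 2⁻¹))] with n hn
  refine sInf_errSet_twirl_eq_zero h₀ h₁ ((le_max_left _ _).trans (le_max_left _ _))
    ((le_max_right _ _).trans (le_max_left _ _)) (le_max_right _ _) ?_ ?_
  · linarith [hn.trans_le (min_le_left _ _)]
  · exact (hn.trans_le (min_le_right _ _)).le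

lemma eq_zero_of_cos_eq_one {φ : ℝ} (hφ : φ ∈ Ico 0 (2 * Real.pi)) (h : Real.cos φ = 1) :
    φ = 0 :=
  (Real.cos_eq_one_iff_of_lt_of_lt (by linarith [hφ.1, Real.pi_pos]) hφ.2).1 h

lemma eq_pi_of_cos_eq_neg_one {φ : ℝ} (hφ : φ ∈ Ico 0 (2 * Real.pi)) (h : Real.cos φ = -1) :
    φ = Real.pi := by
  have h' : Real.cos (φ - Real.pi) = 1 := by rw [Real.cos_sub_pi, h, neg_neg]
  have := (Real.cos_eq_one_iff_of_lt_of_lt (by linarith [hφ.1, Real.pi_pos])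
    (by linarith [hφ.2, Real.pi_pos])).1 h'
  linarith

theorem typeII_error_vanishes_generic (p q φ : ℝ)
    (hp : p ∈ Set.Ioo (0 : ℝ) 1) (hq : q ∈ Set.Ioo (0 : ℝ) 1)
    (hφ : φ ∈ Set.Ico (0 : ℝ) (2 * Real.pi))
    (hdist : qubitR p ≠ qubit q φ) (hexc : ¬(p = q ∧ φ = Real.pi)) :
    ∀ ε ∈ Set.Ioo (0 : ℝ) 1, ∃ nε : ℕ, ∀ n : ℕ, nε ≤ n →
      sInf (errSet n (twirl (mpow n (projv (qubitR p)))) (twirl (mpow n (projv (qubit q φ)))) ε)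
        = 0 := by
  rintro ε ⟨hε, -⟩
  have h₀ : star (qubitR p) ⬝ᵥ qubitR p = 1 := by
    rw [qubitR_eq_qubit]
    exact star_qubit_dotProduct_qubit_self 0 (Ioo_subset_Icc_self hp)
  have h₁ := star_qubit_dotProduct_qubit_self φ (Ioo_subset_Icc_self hq)
  have hσ : ‖star (qubit q φ) ⬝ᵥ sigmaZ (qubit q φ)‖ < 1 := by
    rw [sigmaZ_qubit]
    refine norm_star_qubit_dotProduct_qubit_lt_one hq hq fun ⟨_, hcos⟩ => ?_
    rw [add_sub_cancel_left, Real.cos_pi] at hcos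
    norm_num at hcos
  have hα : ‖star (qubit q φ) ⬝ᵥ qubitR p‖ < 1 := by
    rw [qubitR_eq_qubit]
    refine norm_star_qubit_dotProduct_qubit_lt_one hp hq fun ⟨hpq, hcos⟩ => hdist ?_
    rw [zero_sub, Real.cos_neg] at hcos
    rw [qubitR_eq_qubit, hpq, eq_zero_of_cos_eq_one hφ hcos]
  have hβ : ‖star (sigmaZ (qubit q φ)) ⬝ᵥ qubitR p‖ < 1 := by
    rw [sigmaZ_qubit, qubitR_eq_qubit]
    refine norm_star_qubit_dotProduct_qubit_lt_one hp hq fun ⟨hpq, hcos⟩ =>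
      hexc ⟨hpq, eq_pi_of_cos_eq_neg_one hφ ?_⟩
    rw [zero_sub, Real.cos_neg, Real.cos_add_pi] at hcos
    linarith
  exact eventually_atTop.1 (eventually_sInf_errSet_twirl_eq_zero h₀ h₁ hσ hα hβ hε)
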